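/- In the colored interval graph G_π built from a permutation π of {1,...,k}, no two distinct white vertices have the same red degree; that is, the map w_j ↦ (number of red neighbors of w_j) is injective on white vertices. -/

import Mathlib

/-!
The white interval `W_j` starts at `3j+1` and ends beyond every red interval, so it meets the red
interval `R_i = [3i+2, 3i+3]` exactly when `j ≤ i`. Hence the red degree of `W_j` is `k - j`,
which determines `j`.
-/

/-- The intervals associated to a permutation `π` of `{1,…,k}`: red `R_j = [3j-1,3j]`,
blue `B_j = [3k+3j-2,3k+3j-1]`, white `W_j = [3j-2, 3k+3π(j)]` (indices `0`-based here). -/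
noncomputable def permIvl (k : ℕ) (π : Equiv.Perm (Fin k)) :
    (Fin k ⊕ Fin k ⊕ Fin k) → Set ℝ :=
  Sum.elim (fun j => Set.Icc (3*(j:ℝ)+2) (3*(j:ℝ)+3))
    (Sum.elim (fun j => Set.Icc (3*(k:ℝ)+3*(j:ℝ)+1) (3*(k:ℝ)+3*(j:ℝ)+2))
      (fun j => Set.Icc (3*(j:ℝ)+1) (3*(k:ℝ)+3*((π j : ℕ):ℝ)+3)))

/-- The intersection graph `G_π` of the intervals of `permIvl`. -/
noncomputable def permGraph (k : ℕ) (π : Equiv.Perm (Fin k)) :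
    SimpleGraph (Fin k ⊕ Fin k ⊕ Fin k) where
  Adj u v := u ≠ v ∧ (permIvl k π u ∩ permIvl k π v).Nonempty
  symm := by
    refine ⟨?_⟩
    intro u v h
    obtain ⟨h1, h2⟩ := h
    exact ⟨h1.symm, by rwa [Set.inter_comm]⟩
  loopless := by refine ⟨?_⟩; intro v h; exact h.1 rfl

/-- The 3-coloring: red, blue, white. -/
def permColor (k : ℕ) : (Fin k ⊕ Fin k ⊕ Fin k) → Fin 3 :=
  Sum.elim (fun _ => 0) (Sum.elim (fun _ => 1) (fun _ => 2))

lemma permGraph_adj_white_red_iff (k : ℕ) (π : Equiv.Perm (Fin k)) (j i : Fin k) :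
    (permGraph k π).Adj (Sum.inr (Sum.inr j)) (Sum.inl i) ↔ j ≤ i := by
  have hi : ((i : ℕ) : ℝ) + 1 ≤ k := by exact_mod_cast i.isLt
  have hπj : (0 : ℝ) ≤ ((π j : ℕ) : ℝ) := Nat.cast_nonneg _
  have hstart : (3 * ((j : ℕ) : ℝ) + 1 ≤ 3 * (i : ℕ) + 3) ↔ j ≤ i := by
    rw [Fin.le_iff_val_le_val]
    exact_mod_cast (by omega : 3 * (j : ℕ) + 1 ≤ 3 * i + 3 ↔ (j : ℕ) ≤ i)
  simp only [permGraph, permIvl, Sum.elim_inl, Sum.elim_inr, ne_eq, reduceCtorEq,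
    not_false_eq_true, true_and, Set.Icc_inter_Icc, Set.nonempty_Icc, sup_le_iff, le_inf_iff]
  rw [← hstart]
  constructor
  · rintro ⟨-, h, -⟩
    exact h
  · intro h
    refine ⟨⟨?_, ?_⟩, h, ?_⟩ <;> linarith

lemma card_permGraph_white_red_adj (k : ℕ) (π : Equiv.Perm (Fin k)) (j : Fin k) :
    Nat.card {i : Fin k // (permGraph k π).Adj (Sum.inr (Sum.inr j)) (Sum.inl i)} = k - j := by
  simp_rw [permGraph_adj_white_red_iff]
  rw [Nat.card_eq_fintype_card, Fintype.card_subtype, Finset.filter_le_eq_Ici, Fin.card_Ici]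

/-- No two distinct white vertices of `G_π` have the same red degree. -/
theorem white_red_degree_injective (k : ℕ) (π : Equiv.Perm (Fin k)) :
    Function.Injective (fun j : Fin k =>
      Nat.card {i : Fin k //
        (permGraph k π).Adj (Sum.inr (Sum.inr j)) (Sum.inl i)}) := by
  intro a b hab
  simp only [card_permGraph_white_red_adj] at hab
  exact Fin.ext (by omega)
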